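/- arXiv:math/9909139 — 3 statements merged into one kernel-verified Lean document; each statement's English description precedes it below -/
import Mathlib

section
/- Let m ≥ 1 and let F : ℝ → ℝ be a smooth even function such that F and all of its derivatives are bounded. Then for every ρ > 0, (1/(4πρ)^m) ∫_{0}^{∞} e^{−t²/(4ρ)} t^{2m} F(t) dt = (1/(2π)^m) ∫_{0}^{∞} e^{−t²/(4ρ)} · (D^{m−1}G)′(t) dt, where G(t) = t^{2m−1} F(t). -/
open MeasureTheory Real Set Filter Topology
open scoped ContDiff

/-- The operator `(Df)(t) = f'(t)/t` on real-valued functions. -/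
noncomputable def Dop (f : ℝ → ℝ) : ℝ → ℝ := fun t => deriv f t / t

/-- Auxiliary family of smooth functions. -/
noncomputable def eaux (m : ℕ) (F : ℝ → ℝ) : ℕ → ℝ → ℝ
  | 0 => F
  | (k+1) => fun t => (2*(m:ℝ) - 2*(k:ℝ) - 1) * eaux m F k t + t * deriv (eaux m F k) t

lemma eaux_smooth (m : ℕ) (F : ℝ → ℝ) (hF : ContDiff ℝ ∞ F) (k : ℕ) :
    ContDiff ℝ ∞ (eaux m F k) := by
  induction k with
  | zero => exact hF
  | succ k ih =>
    have hd : ContDiff ℝ ∞ (deriv (eaux m F k)) := (contDiff_infty_iff_deriv.mp ih).2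
    exact (contDiff_const.mul ih).add (contDiff_id.mul hd)

lemma iter_formula (g : ℝ → ℝ) (hg : ContDiff ℝ ∞ g) (a : ℝ) (j : ℕ) (t : ℝ) :
    iteratedDeriv j (fun s => a * g s + s * deriv g s) t
      = (a + j) * iteratedDeriv j g t + t * iteratedDeriv (j+1) g t := by
  have hdiff : ∀ n : ℕ, Differentiable ℝ (iteratedDeriv n g) := fun n =>
    hg.differentiable_iteratedDeriv n (by exact_mod_cast lt_top_iff_ne_top.mpr (by simp))
  induction j generalizing t with
  | zero =>
    simp [iteratedDeriv_succ, iteratedDeriv_zero]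
  | succ j ih =>
    rw [iteratedDeriv_succ]
    have hfun : iteratedDeriv j (fun s => a * g s + s * deriv g s)
        = fun s => (a + j) * iteratedDeriv j g s + s * iteratedDeriv (j+1) g s := funext ih
    rw [hfun]
    have h1 : DifferentiableAt ℝ (fun s => (a + (j:ℝ)) * iteratedDeriv j g s) t :=
      ((hdiff j).differentiableAt).const_mul _
    have h2 : DifferentiableAt ℝ (fun s : ℝ => s * iteratedDeriv (j+1) g s) t :=
      differentiableAt_fun_id.mul ((hdiff (j+1)).differentiableAt)
    rw [deriv_fun_add h1 h2, deriv_const_mul _ ((hdiff j).differentiableAt),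
      deriv_fun_mul differentiableAt_fun_id ((hdiff (j+1)).differentiableAt)]
    simp only [iteratedDeriv_succ, deriv_id'']
    push_cast
    ring


lemma eaux_bound (m : ℕ) (F : ℝ → ℝ) (hF : ContDiff ℝ ∞ F)
    (hbdd : ∀ k : ℕ, ∃ M : ℝ, ∀ x : ℝ, |iteratedDeriv k F x| ≤ M) (k : ℕ) :
    ∀ j : ℕ, ∃ C : ℝ, 0 ≤ C ∧ ∀ t : ℝ, |iteratedDeriv j (eaux m F k) t| ≤ C * (1+|t|)^k := by
  induction k with
  | zero =>
    intro j
    obtain ⟨M, hM⟩ := hbdd j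
    refine ⟨max M 0, le_max_right _ _, fun t => ?_⟩
    have h := (hM t).trans (le_max_left M 0)
    calc |iteratedDeriv j (eaux m F 0) t| = |iteratedDeriv j F t| := rfl
      _ ≤ max M 0 := h
      _ = max M 0 * (1+|t|)^0 := by simp
  | succ k ih =>
    intro j
    obtain ⟨C1, hC1n, hC1⟩ := ih j
    obtain ⟨C2, hC2n, hC2⟩ := ih (j+1)
    set a : ℝ := 2*(m:ℝ) - 2*(k:ℝ) - 1 with ha
    refine ⟨(|a| + j) * C1 + C2, by positivity, fun t => ?_⟩
    have hfor : iteratedDeriv j (eaux m F (k+1)) t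
        = (a + j) * iteratedDeriv j (eaux m F k) t + t * iteratedDeriv (j+1) (eaux m F k) t := by
      have : eaux m F (k+1) = fun s => a * eaux m F k s + s * deriv (eaux m F k) s := rfl
      rw [this, iter_formula _ (eaux_smooth m F hF k)]
    rw [hfor]
    have h1t : (1:ℝ) ≤ 1 + |t| := by simp [abs_nonneg]
    have hp : (0:ℝ) ≤ (1+|t|)^k := by positivity
    calc |(a + j) * iteratedDeriv j (eaux m F k) t + t * iteratedDeriv (j+1) (eaux m F k) t|
        ≤ |a + j| * |iteratedDeriv j (eaux m F k) t| + |t| * |iteratedDeriv (j+1) (eaux m F k) t| := by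
          refine (abs_add_le _ _).trans ?_
          rw [abs_mul, abs_mul]
      _ ≤ (|a| + j) * (C1 * (1+|t|)^k) + (1 + |t|) * (C2 * (1+|t|)^k) := by
          refine add_le_add (mul_le_mul ?_ (hC1 t) (abs_nonneg _) (by positivity)) ?_
          · refine (abs_add_le _ _).trans (by simp)
          · refine mul_le_mul (by simp [abs_nonneg]) (hC2 t) (abs_nonneg _) (by positivity)
      _ ≤ ((|a| + j) * C1 + C2) * (1+|t|)^(k+1) := by
          rw [pow_succ]
          nlinarith [mul_nonneg (mul_nonneg (by positivity : (0:ℝ) ≤ |a| + j) hC1n) hp]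

lemma dop_formula (m : ℕ) (F G : ℝ → ℝ) (hF : ContDiff ℝ ∞ F)
    (hG : ∀ t : ℝ, G t = t ^ (2*m-1) * F t) :
    ∀ k : ℕ, k + 1 ≤ m → ∀ t ∈ Set.Ioi (0:ℝ),
      Dop^[k] G t = t ^ (2*(m-k)-1) * eaux m F k t := by
  intro k
  induction k with
  | zero =>
    intro _ t _
    simpa [eaux] using hG t
  | succ k ih =>
    intro hk t ht
    obtain ⟨n, rfl⟩ : ∃ n, m = (k+2) + n := Nat.exists_eq_add_of_le hk
    have hprev := ih (by omega)
    have ht0 : (0:ℝ) < t := ht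
    have hev : Dop^[k] G =ᶠ[nhds t] fun s => s ^ (2*((k+2)+n-k)-1) * eaux ((k+2)+n) F k s := by
      filter_upwards [isOpen_Ioi.mem_nhds ht] with s hs using hprev s hs
    have hEd : DifferentiableAt ℝ (eaux ((k+2)+n) F k) t :=
      ((eaux_smooth _ F hF k).differentiable (by simp)).differentiableAt
    have hexp : 2*((k+2)+n-k)-1 = 2*n+3 := by omega
    have hder : deriv (Dop^[k] G) t
        = (2*(n:ℝ)+3) * t ^ (2*n+2) * eaux ((k+2)+n) F k t
          + t ^ (2*n+3) * deriv (eaux ((k+2)+n) F k) t := by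
      rw [hev.deriv_eq, hexp]
      have h := ((hasDerivAt_pow (2*n+3) t).fun_mul (hEd.hasDerivAt)).deriv
      rw [h]
      push_cast
      ring_nf
    rw [Function.iterate_succ_apply', Dop, hder]
    have hcoef : (2*(((k+2)+n:ℕ):ℝ) - 2*(k:ℝ) - 1) = 2*(n:ℝ)+3 := by push_cast; ring
    have hexp2 : 2*((k+2)+n-(k+1))-1 = 2*n+1 := by omega
    rw [hexp2]
    have : eaux ((k+2)+n) F (k+1) t
        = (2*(n:ℝ)+3) * eaux ((k+2)+n) F k t + t * deriv (eaux ((k+2)+n) F k) t := by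
      show (2*(((k+2)+n:ℕ):ℝ) - 2*(k:ℝ) - 1) * _ + _ = _
      rw [hcoef]
    rw [this]
    have htne : t ≠ 0 := ne_of_gt ht0
    field_simp
    ring

lemma deriv_dop_formula (m : ℕ) (hm : 1 ≤ m) (F G : ℝ → ℝ) (hF : ContDiff ℝ ∞ F)
    (hG : ∀ t : ℝ, G t = t ^ (2*m-1) * F t) :
    ∀ t ∈ Set.Ioi (0:ℝ), deriv (Dop^[m-1] G) t = eaux m F m t := by
  obtain ⟨m', rfl⟩ : ∃ m', m = m' + 1 := ⟨m-1, by omega⟩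
  intro t ht
  have hprev := dop_formula (m'+1) F G hF hG m' (le_refl _)
  have hev : Dop^[m'] G =ᶠ[nhds t] fun s => s ^ (2*((m'+1)-m')-1) * eaux (m'+1) F m' s := by
    filter_upwards [isOpen_Ioi.mem_nhds ht] with s hs using hprev s hs
  have hexp : 2*((m'+1)-m')-1 = 1 := by omega
  have hEd : DifferentiableAt ℝ (eaux (m'+1) F m') t :=
    ((eaux_smooth _ F hF m').differentiable (by simp)).differentiableAt
  have h1 : (m'+1) - 1 = m' := by omega
  rw [h1, hev.deriv_eq, hexp]
  have h := ((hasDerivAt_pow 1 t).fun_mul (hEd.hasDerivAt)).deriv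
  rw [h]
  have hcoef : (2*(((m'+1):ℕ):ℝ) - 2*(m':ℝ) - 1) = 1 := by push_cast; ring
  show _ = (2*(((m'+1):ℕ):ℝ) - 2*(m':ℝ) - 1) * _ + _
  rw [hcoef]
  push_cast
  ring

lemma one_add_pow_le (x : ℝ) (hx : 0 ≤ x) (d : ℕ) : (1+x)^d ≤ 2^d * (1 + x^d) := by
  rcases le_total x 1 with h | h
  · have h1 : (1+x)^d ≤ 2^d := pow_le_pow_left₀ (by linarith) (by linarith) d
    nlinarith [pow_nonneg hx d, pow_pos (show (0:ℝ) < 2 by norm_num) d]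
  · have h1 : (1+x)^d ≤ (2*x)^d := pow_le_pow_left₀ (by linarith) (by linarith) d
    rw [mul_pow] at h1
    nlinarith [pow_pos (show (0:ℝ) < 2 by norm_num) d]

lemma integ_aux (ρ : ℝ) (hρ : 0 < ρ) (g : ℝ → ℝ) (hg : Continuous g) (C : ℝ) (d : ℕ)
    (hbC : 0 ≤ C) (hb : ∀ t : ℝ, |g t| ≤ C * (1+|t|)^d) :
    IntegrableOn (fun t : ℝ => Real.exp (-(t^2)/(4*ρ)) * g t) (Set.Ioi (0:ℝ)) := by
  have hb0 : (0:ℝ) < 1/(4*ρ) := by positivity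
  have hmaj : IntegrableOn
      (fun t : ℝ => C * 2^d * Real.exp (-(1/(4*ρ)) * t^2)
        + C * 2^d * (t ^ ((d:ℝ)) * Real.exp (-(1/(4*ρ)) * t^2))) (Set.Ioi (0:ℝ)) := by
    refine Integrable.add ?_ ?_
    · exact ((integrable_exp_neg_mul_sq hb0).integrableOn).const_mul _
    · refine ((integrableOn_rpow_mul_exp_neg_mul_sq hb0 ?_)).const_mul _
      have : (0:ℝ) ≤ d := Nat.cast_nonneg d
      linarith
  refine Integrable.mono' hmaj ?_ ?_
  · exact (Continuous.aestronglyMeasurable (by continuity)).restrict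
  · filter_upwards [ae_restrict_mem measurableSet_Ioi] with t ht
    have ht0 : (0:ℝ) < t := ht
    have hexpeq : Real.exp (-(t^2)/(4*ρ)) = Real.exp (-(1/(4*ρ)) * t^2) := by ring_nf
    have habs : |t| = t := abs_of_pos ht0
    have hre : t ^ ((d:ℝ)) = t ^ d := Real.rpow_natCast t d
    rw [Real.norm_eq_abs, abs_mul, abs_of_pos (Real.exp_pos _), hexpeq, hre]
    have h1 := hb t
    rw [habs] at h1
    have h2 : (1+t)^d ≤ 2^d * (1 + t^d) := one_add_pow_le t ht0.le d
    have hE : (0:ℝ) < Real.exp (-(1/(4*ρ)) * t^2) := Real.exp_pos _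
    calc Real.exp (-(1/(4*ρ)) * t^2) * |g t|
        ≤ Real.exp (-(1/(4*ρ)) * t^2) * (C * (2^d * (1 + t^d))) := by
          refine mul_le_mul_of_nonneg_left ?_ hE.le
          exact h1.trans (by nlinarith)
      _ = C * 2^d * Real.exp (-(1/(4*ρ)) * t^2)
          + C * 2^d * (t ^ d * Real.exp (-(1/(4*ρ)) * t^2)) := by ring

lemma ibp_step (ρ : ℝ) (hρ : 0 < ρ) (f f' : ℝ → ℝ)
    (hder : ∀ t : ℝ, HasDerivAt f (f' t) t) (hf0 : f 0 = 0)
    (hcont' : Continuous f') (C : ℝ) (d : ℕ)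
    (hbf : ∀ t : ℝ, |f t| ≤ C * (1+|t|)^d) (hbf' : ∀ t : ℝ, |f' t| ≤ C * (1+|t|)^d) :
    ∫ t in Set.Ioi (0:ℝ), Real.exp (-(t^2)/(4*ρ)) * (t * f t)
      = (2*ρ) * ∫ t in Set.Ioi (0:ℝ), Real.exp (-(t^2)/(4*ρ)) * f' t := by
  have hC : 0 ≤ C := by
    have h := (abs_nonneg (f 0)).trans (hbf 0)
    simpa using h
  set w : ℝ → ℝ := fun t => Real.exp (-(t^2)/(4*ρ)) with hw
  have hcontf : Continuous f := by
    rw [continuous_iff_continuousAt]; exact fun t => (hder t).continuousAt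
  -- derivative of u = w * f
  set u' : ℝ → ℝ := fun t => w t * f' t - (1/(2*ρ)) * (w t * (t * f t)) with hu'
  have hwder : ∀ t : ℝ, HasDerivAt w (w t * (-(2*t)/(4*ρ))) t := by
    intro t
    have h1 : HasDerivAt (fun s : ℝ => -(s^2)/(4*ρ)) (-(2*t)/(4*ρ)) t := by
      have := ((hasDerivAt_pow 2 t).neg).div_const (4*ρ)
      simpa using this
    simpa using h1.exp
  have huder : ∀ t : ℝ, HasDerivAt (fun s => w s * f s) (u' t) t := by
    intro t
    have h := (hwder t).fun_mul (hder t)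
    refine h.congr_deriv (Eq.symm ?_)
    rw [hu']
    field_simp
    ring
  -- integrability of both pieces
  have hint1 : IntegrableOn (fun t : ℝ => w t * f' t) (Set.Ioi (0:ℝ)) :=
    integ_aux ρ hρ f' hcont' C d hC hbf'
  have hint2 : IntegrableOn (fun t : ℝ => w t * (t * f t)) (Set.Ioi (0:ℝ)) := by
    refine integ_aux ρ hρ (fun t => t * f t) (continuous_id.mul hcontf) C (d+1) hC ?_
    intro t
    have h1t : (1:ℝ) ≤ 1 + |t| := by simp [abs_nonneg]
    calc |t * f t| = |t| * |f t| := abs_mul t (f t)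
      _ ≤ (1+|t|) * (C * (1+|t|)^d) := by
          refine mul_le_mul (by simp [abs_nonneg]) (hbf t) (abs_nonneg _) (by linarith)
      _ = C * (1+|t|)^(d+1) := by ring
  have hintu' : IntegrableOn u' (Set.Ioi (0:ℝ)) := hint1.sub (hint2.const_mul _)
  -- limit at infinity
  have htend : Tendsto (fun t => w t * f t) atTop (nhds 0) := by
    have hb0 : (0:ℝ) < 1/(4*ρ) := by positivity
    have hlim : Tendsto (fun t : ℝ => C * 2^d * (t ^ ((d:ℝ)) * Real.exp (-(1/(4*ρ)) * t)))
        atTop (nhds 0) := by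
      have := (tendsto_rpow_mul_exp_neg_mul_atTop_nhds_zero (d:ℝ) _ hb0).const_mul (C * 2^d)
      simpa using this
    refine squeeze_zero_norm' ?_ hlim
    filter_upwards [eventually_ge_atTop (1:ℝ)] with t ht
    have ht0 : (0:ℝ) < t := lt_of_lt_of_le one_pos ht
    have habs : |t| = t := abs_of_pos ht0
    have h1 : |f t| ≤ C * (1+t)^d := by have h := hbf t; rwa [habs] at h
    have h2 : (1+t)^d ≤ (2*t)^d := pow_le_pow_left₀ (by linarith) (by linarith) d
    have h3 : Real.exp (-(t^2)/(4*ρ)) ≤ Real.exp (-(1/(4*ρ)) * t) := by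
      refine Real.exp_le_exp.mpr ?_
      rw [show -(1/(4*ρ)) * t = -t/(4*ρ) by ring]
      have h4 : t ≤ t^2 := by nlinarith
      gcongr
      all_goals nlinarith
    have hre : t ^ ((d:ℝ)) = t ^ d := Real.rpow_natCast t d
    rw [Real.norm_eq_abs, abs_mul, hw]
    simp only []
    rw [abs_of_pos (Real.exp_pos _), hre]
    calc Real.exp (-(t^2)/(4*ρ)) * |f t|
        ≤ Real.exp (-(1/(4*ρ)) * t) * (C * (2*t)^d) := by
          refine mul_le_mul h3 (h1.trans ?_) (abs_nonneg _) (Real.exp_pos _).le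
          nlinarith [pow_nonneg (show (0:ℝ) ≤ 1+t by linarith) d]
      _ = C * 2^d * (t ^ d * Real.exp (-(1/(4*ρ)) * t)) := by rw [mul_pow]; ring
  -- FTC on (0, ∞)
  have hcont0 : ContinuousWithinAt (fun t => w t * f t) (Set.Ici (0:ℝ)) 0 :=
    ((huder 0).continuousAt).continuousWithinAt
  have hFTC := integral_Ioi_of_hasDerivAt_of_tendsto hcont0
    (fun x _ => huder x) hintu' htend
  have hval : w 0 * f 0 = 0 := by simp [hf0]
  rw [hval, sub_zero] at hFTC
  have hsplit : ∫ t in Set.Ioi (0:ℝ), u' t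
      = (∫ t in Set.Ioi (0:ℝ), w t * f' t)
        - (1/(2*ρ)) * ∫ t in Set.Ioi (0:ℝ), w t * (t * f t) := by
    rw [hu']
    rw [integral_sub hint1 (hint2.const_mul _), MeasureTheory.integral_const_mul]
  rw [hsplit] at hFTC
  have hrne : (2*ρ) ≠ 0 := by positivity
  rw [sub_eq_zero] at hFTC
  rw [hFTC, ← mul_assoc, mul_one_div_cancel hrne, one_mul]

lemma J_step (m : ℕ) (F : ℝ → ℝ) (hF : ContDiff ℝ ∞ F)
    (hbdd : ∀ k : ℕ, ∃ M : ℝ, ∀ x : ℝ, |iteratedDeriv k F x| ≤ M)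
    (ρ : ℝ) (hρ : 0 < ρ) (k : ℕ) (hk : k < m) :
    ∫ t in Set.Ioi (0:ℝ), Real.exp (-(t^2)/(4*ρ)) * (t^(2*(m-k)) * eaux m F k t)
      = (2*ρ) * ∫ t in Set.Ioi (0:ℝ),
          Real.exp (-(t^2)/(4*ρ)) * (t^(2*(m-(k+1))) * eaux m F (k+1) t) := by
  obtain ⟨n, rfl⟩ : ∃ n, m = (k+1) + n := Nat.exists_eq_add_of_le hk
  have e1 : 2*((k+1)+n-k) = 2*n+2 := by omega
  have e2 : 2*((k+1)+n-(k+1)) = 2*n := by omega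
  rw [e1, e2]
  set E : ℝ → ℝ := eaux ((k+1)+n) F k with hE
  set E' : ℝ → ℝ := eaux ((k+1)+n) F (k+1) with hE'
  have hEsm := eaux_smooth ((k+1)+n) F hF k
  have hE'sm := eaux_smooth ((k+1)+n) F hF (k+1)
  have hEdiff : Differentiable ℝ E := hEsm.differentiable (by simp)
  set f : ℝ → ℝ := fun t => t^(2*n+1) * E t with hf
  set f' : ℝ → ℝ := fun t => t^(2*n) * E' t with hf'
  have hder : ∀ t : ℝ, HasDerivAt f (f' t) t := by
    intro t
    have h := (hasDerivAt_pow (2*n+1) t).fun_mul ((hEdiff t).hasDerivAt)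
    refine h.congr_deriv (Eq.symm ?_)
    have hcoef : E' t = (2*(n:ℝ)+1) * E t + t * deriv E t := by
      show (2*(((k+1)+n:ℕ):ℝ) - 2*(k:ℝ) - 1) * E t + t * deriv E t = _
      push_cast
      ring_nf
    show t ^ (2*n) * E' t = _
    rw [hcoef]
    push_cast
    ring
  -- bounds
  obtain ⟨C1, hC1n, hC1⟩ := eaux_bound ((k+1)+n) F hF hbdd k 0
  obtain ⟨C2, hC2n, hC2⟩ := eaux_bound ((k+1)+n) F hF hbdd (k+1) 0
  simp only [iteratedDeriv_zero] at hC1 hC2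
  set C : ℝ := max C1 C2 with hC
  have hCn : 0 ≤ C := le_trans hC1n (le_max_left _ _)
  set d : ℕ := 2*n+k+1 with hd
  have habs : ∀ t : ℝ, ∀ p : ℕ, |t|^p ≤ (1+|t|)^p := fun t p =>
    pow_le_pow_left₀ (abs_nonneg t) (by linarith [abs_nonneg t]) p
  have h1t : ∀ t : ℝ, (1:ℝ) ≤ 1 + |t| := fun t => by linarith [abs_nonneg t]
  have hbf : ∀ t : ℝ, |f t| ≤ C * (1+|t|)^d := by
    intro t
    calc |f t| = |t|^(2*n+1) * |E t| := by rw [hf]; rw [abs_mul, abs_pow]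
      _ ≤ (1+|t|)^(2*n+1) * (C1 * (1+|t|)^k) :=
          mul_le_mul (habs t _) (hC1 t) (abs_nonneg _) (by positivity)
      _ = C1 * (1+|t|)^(2*n+1+k) := by rw [pow_add]; ring
      _ ≤ C * (1+|t|)^d := by
          have : (2*n+1+k) = d := by omega
          rw [this]
          exact mul_le_mul_of_nonneg_right (le_max_left _ _) (by positivity)
  have hbf' : ∀ t : ℝ, |f' t| ≤ C * (1+|t|)^d := by
    intro t
    calc |f' t| = |t|^(2*n) * |E' t| := by rw [hf']; rw [abs_mul, abs_pow]
      _ ≤ (1+|t|)^(2*n) * (C2 * (1+|t|)^(k+1)) :=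
          mul_le_mul (habs t _) (hC2 t) (abs_nonneg _) (by positivity)
      _ = C2 * (1+|t|)^(2*n+(k+1)) := by rw [pow_add]; ring
      _ ≤ C * (1+|t|)^d := by
          have : (2*n+(k+1)) = d := by omega
          rw [this]
          exact mul_le_mul_of_nonneg_right (le_max_right _ _) (by positivity)
  have hf0 : f 0 = 0 := by simp [hf]
  have hcont' : Continuous f' := (continuous_pow _).mul (hE'sm.continuous)
  have hibp := ibp_step ρ hρ f f' hder hf0 hcont' C d hbf hbf'
  have hL : (fun t : ℝ => Real.exp (-(t^2)/(4*ρ)) * (t^(2*n+2) * E t))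
      = fun t : ℝ => Real.exp (-(t^2)/(4*ρ)) * (t * f t) := by
    funext t; rw [hf]; ring
  have hR : (fun t : ℝ => Real.exp (-(t^2)/(4*ρ)) * (t^(2*n) * E' t))
      = fun t : ℝ => Real.exp (-(t^2)/(4*ρ)) * f' t := by
    funext t; rw [hf']
  rw [hL, hR, hibp]

theorem stmt6 (m : ℕ) (hm : 1 ≤ m) (F : ℝ → ℝ)
    (hF : ContDiff ℝ (⊤ : ℕ∞) F)
    (heven : ∀ x : ℝ, F (-x) = F x)
    (hbdd : ∀ k : ℕ, ∃ M : ℝ, ∀ x : ℝ, |iteratedDeriv k F x| ≤ M)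
    (G : ℝ → ℝ) (hG : ∀ t : ℝ, G t = t ^ (2*m-1) * F t)
    (ρ : ℝ) (hρ : 0 < ρ) :
    (1 / (4*π*ρ)^m) *
        ∫ t in Set.Ioi (0:ℝ), Real.exp (-(t^2) / (4*ρ)) * t^(2*m) * F t =
      (1 / (2*π)^m) *
        ∫ t in Set.Ioi (0:ℝ), Real.exp (-(t^2) / (4*ρ)) * deriv (Dop^[m-1] G) t := by
  have hF' : ContDiff ℝ ∞ F := hF.of_le (by simp)
  have chain : ∀ i : ℕ, i ≤ m →
      (∫ t in Set.Ioi (0:ℝ), Real.exp (-(t^2)/(4*ρ)) * (t^(2*(m-(m-i))) * eaux m F (m-i) t))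
        = (2*ρ)^i * ∫ t in Set.Ioi (0:ℝ),
            Real.exp (-(t^2)/(4*ρ)) * (t^(2*(m-m)) * eaux m F m t) := by
    intro i
    induction i with
    | zero => intro _; simp
    | succ i ih =>
      intro h
      have h1 : m - (i+1) < m := by omega
      have hstep := J_step m F hF' hbdd ρ hρ (m-(i+1)) h1
      have h2 : m - (i+1) + 1 = m - i := by omega
      rw [hstep, h2, ih (by omega)]
      ring
  have hJ0 := chain m le_rfl
  rw [Nat.sub_self] at hJ0
  -- identify LHS integral with J 0
  have hLHS : (∫ t in Set.Ioi (0:ℝ), Real.exp (-(t^2) / (4*ρ)) * t^(2*m) * F t)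
      = ∫ t in Set.Ioi (0:ℝ), Real.exp (-(t^2)/(4*ρ)) * (t^(2*(m-0)) * eaux m F 0 t) := by
    congr 1
    funext t
    have : eaux m F 0 = F := rfl
    rw [this, Nat.sub_zero]
    ring
  -- identify RHS integral with J m
  have hRHS : (∫ t in Set.Ioi (0:ℝ), Real.exp (-(t^2) / (4*ρ)) * deriv (Dop^[m-1] G) t)
      = ∫ t in Set.Ioi (0:ℝ), Real.exp (-(t^2)/(4*ρ)) * (t^(2*(m-m)) * eaux m F m t) := by
    refine setIntegral_congr_fun measurableSet_Ioi (fun t ht => ?_)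
    rw [deriv_dop_formula m hm F G hF' hG t ht, Nat.sub_self]
    ring
  rw [hLHS, hRHS]
  simp only [Nat.sub_self, Nat.sub_zero] at hJ0 ⊢
  rw [hJ0]
  have hpi : (0:ℝ) < π := Real.pi_pos
  have hpow : (4*π*ρ)^m = (2*π)^m * (2*ρ)^m := by
    rw [← mul_pow]; ring_nf
  rw [hpow]
  have h1 : ((2:ℝ)*π)^m ≠ 0 := by positivity
  have h2 : ((2:ℝ)*ρ)^m ≠ 0 := by positivity
  field_simp
end

section
/- Let X and Y be d×d complex matrices and let n ∈ ℕ. Then (X+Y)^n / n! = lim_{m→∞} Σ_{α∈ℕ^{2m}, |α|=n} (1/(m^n · α!)) · X^{α₁} Y^{α₂} X^{α₃} Y^{α₄} ⋯ X^{α_{2m−1}} Y^{α_{2m}}, where the product of matrix powers is taken in the indicated order and the limit is in any (equivalently every) norm on the space of d×d complex matrices. -/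
/-!
The `m`-th sum is `m⁻ⁿ` times the degree-`n` part of `exp Z₀ ⋯ exp Z₂ₘ₋₁` for the alternating
sequence `Z = X, Y, X, Y, …`. Multi-indices with an entry `≥ 2` carry total weight
`((2m)ⁿ/n! - C(2m, n)) / mⁿ → 0`. The remaining ones are the `n`-subsets of `{0, …, 2m - 1}`,
i.e. order embeddings `f : Fin n ↪o Fin (2m)`, and `f` contributes the word in `X, Y` read off
from the parities of its values. For each of the `2ⁿ` words, `j ↦ 2 g j` or `2 g j + 1` injects
the `C(m, n)` embeddings `g : Fin n ↪o Fin m` into the embeddings with that parity pattern, while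
all these counts add up to `C(2m, n)`. Since `C(m, n) ~ mⁿ/n!` and `C(2m, n) ~ 2ⁿ mⁿ/n!`, every
count is `~ mⁿ/n!`, so the sums tend to `(∑ words) / n! = (X + Y)ⁿ / n!`.
-/

open Filter Finset Topology
open scoped Nat

section OrderedMonomial

variable {A : Type*} [Monoid A]

theorem List.prod_map_ite_one {ι : Type*} (p : ι → Prop) [DecidablePred p] (g : ι → A)
    (l : List ι) :
    (l.map fun i => if p i then g i else 1).prod = ((l.filter fun i => p i).map g).prod := by
  induction l with
  | nil => rfl
  | cons a l ih => by_cases h : p a <;> simp [h, ih]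

theorem List.filter_finRange_mem_range {n k : ℕ} (f : Fin n ↪o Fin k) :
    (List.finRange k).filter (fun i => decide (i ∈ Set.range f)) = List.ofFn f := by
  refine List.SortedLT.eq_of_mem_iff ?_ (List.sortedLT_ofFn_iff.2 f.strictMono) fun i => ?_
  · exact List.sortedLT_iff_pairwise.2
      ((List.sortedLT_iff_pairwise.1 (List.sortedLT_finRange k)).filter _)
  · simp

def orderedMonomial {k : ℕ} (Z : Fin k → A) (α : Fin k → ℕ) : A :=
  (List.ofFn fun i => Z i ^ α i).prod

noncomputable def rangeIndicator {n k : ℕ} (f : Fin n ↪o Fin k) : Fin k → ℕ :=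
  (Set.range f).indicator 1

theorem orderedMonomial_rangeIndicator {n k : ℕ} (Z : Fin k → A) (f : Fin n ↪o Fin k) :
    orderedMonomial Z (rangeIndicator f) = (List.ofFn (Z ∘ f)).prod := by
  classical
  have hpow : (fun i => Z i ^ rangeIndicator f i) =
      fun i => if i ∈ Set.range f then Z i else 1 := by
    funext i
    by_cases h : i ∈ Set.range f <;> simp [rangeIndicator, h]
  rw [orderedMonomial, hpow, List.ofFn_eq_map, List.prod_map_ite_one,
    List.filter_finRange_mem_range, List.map_ofFn]

end OrderedMonomial

theorem rangeIndicator_mem_antidiagonalTuple {n k : ℕ} (f : Fin n ↪o Fin k) :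
    rangeIndicator f ∈ Finset.Nat.antidiagonalTuple k n := by
  classical
  rw [Finset.Nat.mem_antidiagonalTuple, rangeIndicator]
  simp [Set.indicator_apply, sum_boole, card_image_of_injective _ f.injective]

theorem prod_factorial_rangeIndicator {n k : ℕ} (f : Fin n ↪o Fin k) :
    ∏ i, (rangeIndicator f i)! = 1 :=
  prod_eq_one fun i _ => by
    by_cases h : i ∈ Set.range f <;> simp [rangeIndicator, h]

theorem rangeIndicator_injective (n k : ℕ) :
    Function.Injective (rangeIndicator : (Fin n ↪o Fin k) → Fin k → ℕ) := fun f g h =>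
  DFunLike.coe_injective ((f.strictMono.range_inj g.strictMono).1 (Set.indicator_one_inj ℕ h))

theorem Fintype.card_orderEmbedding_fin (n k : ℕ) :
    Fintype.card (Fin n ↪o Fin k) = k.choose n := by
  rw [← Nat.card_eq_fintype_card, Nat.card_congr Set.powersetCard.ofFinEmbEquiv,
    Set.powersetCard.card, Nat.card_eq_fintype_card, Fintype.card_fin]

noncomputable def squarefreeTuples (k n : ℕ) : Finset (Fin k → ℕ) :=
  univ.image (rangeIndicator : (Fin n ↪o Fin k) → Fin k → ℕ)

theorem squarefreeTuples_subset (k n : ℕ) :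
    squarefreeTuples k n ⊆ Finset.Nat.antidiagonalTuple k n := by
  intro α hα
  obtain ⟨f, -, rfl⟩ := mem_image.1 hα
  exact rangeIndicator_mem_antidiagonalTuple f

theorem sum_squarefreeTuples {M : Type*} [AddCommMonoid M] (k n : ℕ) (g : (Fin k → ℕ) → M) :
    ∑ α ∈ squarefreeTuples k n, g α = ∑ f : Fin n ↪o Fin k, g (rangeIndicator f) :=
  sum_image (rangeIndicator_injective n k).injOn

theorem norm_orderedMonomial_le {A : Type*} [SeminormedRing A] [NormOneClass A] {k : ℕ}
    {Z : Fin k → A} {C : ℝ} (hZ : ∀ i, ‖Z i‖ ≤ C) (α : Fin k → ℕ) :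
    ‖orderedMonomial Z α‖ ≤ C ^ ∑ i, α i := by
  calc ‖orderedMonomial Z α‖ ≤ ∏ i, ‖Z i ^ α i‖ := by
        simpa [orderedMonomial, List.map_ofFn, List.prod_ofFn] using
          List.norm_prod_le (List.ofFn fun i => Z i ^ α i)
    _ ≤ ∏ i, C ^ α i := prod_le_prod (fun _ _ => norm_nonneg _)
        fun i _ => (norm_pow_le _ _).trans (pow_le_pow_left₀ (norm_nonneg _) (hZ i) _)
    _ = C ^ ∑ i, α i := prod_pow_eq_pow_sum _ _ _

theorem sum_inv_prod_factorial_antidiagonalTuple (k n : ℕ) :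
    ∑ α ∈ Finset.Nat.antidiagonalTuple k n, (∏ i, ((α i)! : ℝ))⁻¹ = k ^ n / n ! := by
  have hk : (k : ℝ) ^ n = ∑ α ∈ Finset.Nat.antidiagonalTuple k n, (Nat.multinomial univ α : ℝ) := by
    simpa [← piAntidiag_univ_fin_eq_antidiagonalTuple] using
      sum_pow_eq_sum_piAntidiag (univ : Finset (Fin k)) (fun _ => (1 : ℝ)) n
  rw [hk, sum_div]
  refine sum_congr rfl fun α hα => ?_
  have hspec := Nat.multinomial_spec univ α
  rw [Finset.Nat.mem_antidiagonalTuple.1 hα] at hspec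
  rw [eq_div_iff (by positivity), ← hspec, Nat.cast_mul, Nat.cast_prod]
  field_simp

section ProdExpDegree

variable (𝕜 : Type*) {A : Type*} [Field 𝕜] [Ring A] [Module 𝕜 A] {k : ℕ}

/-- The degree-`n` part of `exp (Z 0) * ⋯ * exp (Z (k - 1))`. -/
noncomputable def prodExpDegree (Z : Fin k → A) (n : ℕ) : A :=
  ∑ α ∈ Finset.Nat.antidiagonalTuple k n, (∏ i, ((α i)! : 𝕜))⁻¹ • orderedMonomial Z α

theorem prodExpDegree_eq_sum_sdiff_add (Z : Fin k → A) (n : ℕ) :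
    prodExpDegree 𝕜 Z n =
      ∑ α ∈ Finset.Nat.antidiagonalTuple k n \ squarefreeTuples k n,
          (∏ i, ((α i)! : 𝕜))⁻¹ • orderedMonomial Z α +
        ∑ f : Fin n ↪o Fin k, (List.ofFn (Z ∘ f)).prod := by
  rw [prodExpDegree, ← sum_sdiff (squarefreeTuples_subset k n), sum_squarefreeTuples]
  congr 1
  refine sum_congr rfl fun f _ => ?_
  rw [← Nat.cast_prod, prod_factorial_rangeIndicator, Nat.cast_one, inv_one, one_smul,
    orderedMonomial_rangeIndicator]

end ProdExpDegree

theorem norm_sum_sdiff_squarefreeTuples_le {𝕜 A : Type*} [RCLike 𝕜] [NormedRing A]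
    [NormOneClass A] [NormedAlgebra 𝕜 A] {k : ℕ} {Z : Fin k → A} {C : ℝ} (hZ : ∀ i, ‖Z i‖ ≤ C)
    (n : ℕ) :
    ‖∑ α ∈ Finset.Nat.antidiagonalTuple k n \ squarefreeTuples k n,
        (∏ i, ((α i)! : 𝕜))⁻¹ • orderedMonomial Z α‖ ≤
      C ^ n * (k ^ n / (n ! : ℝ) - k.choose n) := by
  have hsum : ∑ α ∈ Finset.Nat.antidiagonalTuple k n \ squarefreeTuples k n,
      (∏ i, ((α i)! : ℝ))⁻¹ = k ^ n / (n ! : ℝ) - k.choose n := by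
    rw [sum_sdiff_eq_sub (squarefreeTuples_subset k n),
      sum_inv_prod_factorial_antidiagonalTuple, sum_squarefreeTuples]
    simp_rw [← Nat.cast_prod, prod_factorial_rangeIndicator]
    simp [Fintype.card_orderEmbedding_fin]
  rw [← hsum, mul_sum]
  refine (norm_sum_le _ _).trans (sum_le_sum fun α hα => ?_)
  have hdeg := Finset.Nat.mem_antidiagonalTuple.1 (mem_sdiff.1 hα).1
  rw [norm_smul, norm_inv, norm_prod]
  simp_rw [RCLike.norm_natCast]
  rw [mul_comm]
  gcongr
  simpa [hdeg] using norm_orderedMonomial_le hZ α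

theorem add_pow_eq_sum_prod_ofFn_cond {R : Type*} [Semiring R] (x y : R) (n : ℕ) :
    (x + y) ^ n = ∑ w : Fin n → Bool, (List.ofFn fun j => cond (w j) x y).prod := by
  induction n with
  | zero => simp
  | succ n ih =>
    rw [pow_succ', ih, mul_sum, ← (Fin.consEquiv fun _ => Bool).sum_comp,
      Fintype.sum_prod_type, Fintype.sum_bool]
    simp [List.ofFn_succ, add_mul, sum_add_distrib]

def parityPattern {n k : ℕ} (f : Fin n ↪o Fin k) : Fin n → Bool :=
  fun j => decide ((f j : ℕ) % 2 = 0)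

def doubleWithPattern {n m : ℕ} (w : Fin n → Bool) (g : Fin n ↪o Fin m) : Fin n ↪o Fin (2 * m) :=
  OrderEmbedding.ofStrictMono (fun j => ⟨2 * g j + (!w j).toNat, by
      have := (g j).isLt; have := Bool.toNat_le (!w j); omega⟩)
    fun i j hij => by
      have := g.strictMono hij; have := Bool.toNat_le (!w i)
      simp only [Fin.lt_def] at this ⊢; omega

@[simp]
theorem coe_doubleWithPattern_apply {n m : ℕ} (w : Fin n → Bool) (g : Fin n ↪o Fin m) (j : Fin n) :
    (doubleWithPattern w g j : ℕ) = 2 * g j + (!w j).toNat :=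
  rfl

theorem doubleWithPattern_injective {n m : ℕ} (w : Fin n → Bool) :
    Function.Injective (doubleWithPattern (m := m) w) := by
  intro g g' h
  ext j
  have := congrArg (fun f => (f j : ℕ)) h
  simp only [coe_doubleWithPattern_apply] at this
  omega

theorem parityPattern_doubleWithPattern {n m : ℕ} (w : Fin n → Bool) (g : Fin n ↪o Fin m) :
    parityPattern (doubleWithPattern w g) = w := by
  funext j
  cases h : w j <;> simp [parityPattern, h, Nat.add_mod]

theorem choose_le_card_parityPattern_eq (m n : ℕ) (w : Fin n → Bool) :
    m.choose n ≤ #{f : Fin n ↪o Fin (2 * m) | parityPattern f = w} := by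
  rw [← Fintype.card_orderEmbedding_fin, ← card_univ]
  exact card_le_card_of_injOn (doubleWithPattern w)
    (fun g _ => by simp [parityPattern_doubleWithPattern]) (doubleWithPattern_injective w).injOn

theorem sum_card_parityPattern_eq (k n : ℕ) :
    ∑ w : Fin n → Bool, #{f : Fin n ↪o Fin k | parityPattern f = w} = k.choose n := by
  rw [← Fintype.card_orderEmbedding_fin, ← card_univ,
    card_eq_sum_card_fiberwise (fun f _ => mem_univ (parityPattern f))]

theorem tendsto_of_forall_le_of_tendsto_sum {α ι : Type*} [Fintype ι] {l : Filter α}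
    {a : ι → α → ℝ} {b : α → ℝ} {L : ℝ} (hb : Tendsto b l (𝓝 L))
    (hsum : Tendsto (fun x => ∑ i, a i x) l (𝓝 (Fintype.card ι * L)))
    (hle : ∀ i x, b x ≤ a i x) (i : ι) : Tendsto (a i) l (𝓝 L) := by
  classical
  have hupper : ∀ x, a i x ≤ ∑ j, a j x - (Fintype.card ι - 1 : ℝ) * b x := by
    intro x
    have hrest := card_nsmul_le_sum (univ.erase i) (a · x) (b x) fun j _ => hle j x
    rw [card_erase_of_mem (mem_univ i), card_univ, nsmul_eq_mul,
      Nat.cast_pred (Fintype.card_pos_iff.2 ⟨i⟩)] at hrest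
    linarith [add_sum_erase univ (a · x) (mem_univ i)]
  refine tendsto_of_tendsto_of_tendsto_of_le_of_le hb ?_ (hle i) hupper
  convert hsum.sub (hb.const_mul (Fintype.card ι - 1 : ℝ)) using 2
  ring

theorem tendsto_choose_mul_div_pow {a : ℕ} (ha : 0 < a) (n : ℕ) :
    Tendsto (fun m : ℕ => ((a * m).choose n : ℝ) / m ^ n) atTop (𝓝 (a ^ n / n !)) := by
  have hlin : Tendsto (fun N : ℕ => N * ((a : ℝ) / N)) atTop (𝓝 a) :=
    tendsto_const_nhds.congr' <| by
      filter_upwards [eventually_ne_atTop 0] with N hN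
      field_simp
  have hmul : Tendsto (a * ·) atTop atTop :=
    tendsto_atTop_mono (fun m => Nat.le_mul_of_pos_left m ha) tendsto_id
  convert (ProbabilityTheory.tendsto_choose_mul_pow_atTop n hlin).comp hmul using 2 with m
  have ha' : (a : ℝ) ≠ 0 := by exact_mod_cast ha.ne'
  rw [Function.comp_apply, Nat.cast_mul, div_mul_cancel_left₀ ha', inv_pow, div_eq_mul_inv]

theorem tendsto_card_parityPattern_eq_div_pow (n : ℕ) (w : Fin n → Bool) :
    Tendsto (fun m : ℕ => (#{f : Fin n ↪o Fin (2 * m) | parityPattern f = w} : ℝ) / m ^ n)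
      atTop (𝓝 (n ! : ℝ)⁻¹) := by
  refine tendsto_of_forall_le_of_tendsto_sum (b := fun m : ℕ => (m.choose n : ℝ) / m ^ n)
    (a := fun w m => (#{f : Fin n ↪o Fin (2 * m) | parityPattern f = w} : ℝ) / m ^ n)
    ?_ ?_ (fun w m => ?_) w
  · simpa using tendsto_choose_mul_div_pow Nat.one_pos n
  · simp_rw [← sum_div, ← Nat.cast_sum, sum_card_parityPattern_eq]
    convert tendsto_choose_mul_div_pow two_pos n using 2
    simp [div_eq_mul_inv]
  · gcongr
    exact_mod_cast choose_le_card_parityPattern_eq m n w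

def alternating {A : Type*} (X Y : A) (k : ℕ) : Fin k → A :=
  fun i => if (i : ℕ) % 2 = 0 then X else Y

theorem sum_prod_ofFn_alternating_comp {A : Type*} [Semiring A] (X Y : A) (k n : ℕ) :
    ∑ f : Fin n ↪o Fin k, (List.ofFn (alternating X Y k ∘ f)).prod =
      ∑ w : Fin n → Bool,
        #{f : Fin n ↪o Fin k | parityPattern f = w} • (List.ofFn fun j => cond (w j) X Y).prod := by
  rw [← sum_fiberwise univ parityPattern]
  refine sum_congr rfl fun w _ => ?_
  rw [← sum_const]
  refine sum_congr rfl fun f hf => ?_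
  rw [← (mem_filter.1 hf).2]
  simp [alternating, parityPattern, Function.comp_def, Bool.cond_decide]

theorem tendsto_inv_pow_smul_sum_prod_ofFn_alternating_comp {𝕜 A : Type*} [RCLike 𝕜] [Ring A]
    [TopologicalSpace A] [ContinuousAdd A] [Module 𝕜 A] [ContinuousSMul 𝕜 A] (X Y : A) (n : ℕ) :
    Tendsto (fun m : ℕ => ((m : 𝕜) ^ n)⁻¹ •
        ∑ f : Fin n ↪o Fin (2 * m), (List.ofFn (alternating X Y (2 * m) ∘ f)).prod)
      atTop (𝓝 ((n ! : 𝕜)⁻¹ • (X + Y) ^ n)) := by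
  simp_rw [sum_prod_ofFn_alternating_comp, smul_sum, ← Nat.cast_smul_eq_nsmul 𝕜, smul_smul]
  rw [add_pow_eq_sum_prod_ofFn_cond, smul_sum]
  refine tendsto_finsetSum _ fun w _ => Tendsto.smul_const ?_ _
  have := (RCLike.continuous_ofReal (K := 𝕜)).tendsto _ |>.comp
    (tendsto_card_parityPattern_eq_div_pow n w)
  push_cast [Function.comp_def, div_eq_inv_mul] at this
  exact this

section Limits

variable {𝕜 A : Type*} [RCLike 𝕜] [NormedRing A] [NormOneClass A] [NormedAlgebra 𝕜 A]

theorem tendsto_inv_pow_smul_sum_sdiff_squarefreeTuples (X Y : A) (n : ℕ) :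
    Tendsto (fun m : ℕ => ((m : 𝕜) ^ n)⁻¹ •
        ∑ α ∈ Finset.Nat.antidiagonalTuple (2 * m) n \ squarefreeTuples (2 * m) n,
          (∏ i, ((α i)! : 𝕜))⁻¹ • orderedMonomial (alternating X Y (2 * m)) α)
      atTop (𝓝 0) := by
  set C := max ‖X‖ ‖Y‖
  have hZ : ∀ k i, ‖alternating X Y k i‖ ≤ C := fun k i => by
    unfold alternating; split_ifs <;> simp [C]
  have hlim : Tendsto (fun m : ℕ => C ^ n * (2 ^ n / (n ! : ℝ) - ((2 * m).choose n : ℝ) / m ^ n))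
      atTop (𝓝 0) := by
    simpa using ((tendsto_choose_mul_div_pow two_pos n).const_sub (2 ^ n / (n ! : ℝ))).const_mul
      (C ^ n)
  refine squeeze_zero_norm' ?_ hlim
  filter_upwards [eventually_ne_atTop 0] with m hm
  have hm' : (m : ℝ) ^ n ≠ 0 := by positivity
  rw [norm_smul, norm_inv, norm_pow, RCLike.norm_natCast]
  calc ((m : ℝ) ^ n)⁻¹ * ‖_‖
      ≤ ((m : ℝ) ^ n)⁻¹ * (C ^ n * ((2 * m : ℕ) ^ n / (n ! : ℝ) - (2 * m).choose n)) := by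
        gcongr
        exact norm_sum_sdiff_squarefreeTuples_le (hZ _) n
    _ = C ^ n * (2 ^ n / (n ! : ℝ) - ((2 * m).choose n : ℝ) / m ^ n) := by
        field_simp
        push_cast
        ring

theorem tendsto_inv_pow_smul_prodExpDegree_alternating (X Y : A) (n : ℕ) :
    Tendsto (fun m : ℕ => ((m : 𝕜) ^ n)⁻¹ • prodExpDegree 𝕜 (alternating X Y (2 * m)) n)
      atTop (𝓝 ((n ! : 𝕜)⁻¹ • (X + Y) ^ n)) := by
  simpa [prodExpDegree_eq_sum_sdiff_add, smul_add] using
    (tendsto_inv_pow_smul_sum_sdiff_squarefreeTuples X Y n).add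
      (tendsto_inv_pow_smul_sum_prod_ofFn_alternating_comp X Y n)

end Limits

theorem stmt11 (d : ℕ) (X Y : Matrix (Fin d) (Fin d) ℂ) (n : ℕ) :
    Tendsto (fun m : ℕ =>
        ∑ α ∈ Finset.Nat.antidiagonalTuple (2*m) n,
          (((m : ℂ)^n * ∏ i, (Nat.factorial (α i) : ℂ))⁻¹) •
            (List.ofFn (fun i : Fin (2*m) =>
              (if (i : ℕ) % 2 = 0 then X else Y) ^ (α i))).prod)
      atTop (nhds ((Nat.factorial n : ℂ)⁻¹ • (X + Y)^n)) := by
  -- the `ℓ∞` operator norm has `‖1‖ = 1` only for `d ≠ 0`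
  rcases isEmpty_or_nonempty (Fin d) with _ | _
  · exact tendsto_const_nhds.congr fun _ => Subsingleton.elim _ _
  let _ : NormedRing (Matrix (Fin d) (Fin d) ℂ) := Matrix.linftyOpNormedRing
  let _ : NormedAlgebra ℂ (Matrix (Fin d) (Fin d) ℂ) := Matrix.linftyOpNormedAlgebra
  have : NormOneClass (Matrix (Fin d) (Fin d) ℂ) := Matrix.linfty_opNormOneClass
  refine (tendsto_inv_pow_smul_prodExpDegree_alternating X Y n).congr fun m => ?_
  simp only [prodExpDegree, smul_sum, smul_smul, mul_inv]
  rfl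
end

section
/- Let A and B be bounded linear operators on a complex Banach space and let n ∈ ℕ. Then (A²+B²)^n / n! = lim_{m→∞} Σ_{α∈ℕ^{2m}, |α|=n} (1/(m^n · α!)) · A^{2α₁} B^{2α₂} A^{2α₃} B^{2α₄} ⋯ A^{2α_{2m−1}} B^{2α_{2m}}, the limit being taken in operator norm. -/
/-!
Expand `(X₁ + ⋯ + Xₖ)ⁿ` noncommutatively as the sum of all `kⁿ` words of length `n`. On the
other side, the ordered product attached to a multi-index `α ∈ ℕ^{km}` (here `k = 2`, `X₁ = A²`,
`X₂ = B²`) is also such a word, so the `m`-th approximant is `∑ₚ (wₘ(p) / mⁿ) • Xₚ`, where `wₘ(p)`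
is the sum of `1/α!` over the `α` spelling the word `p`. It remains to show `wₘ(p) / mⁿ → 1/n!`
for every `p`. Each `wₘ(p)` is at least `(m choose n)`: choosing `n` of the `m` blocks of length
`k` and, in the `j`-th chosen block, the position of colour `pⱼ` gives a `0/1`-valued `α` spelling
`p`. The weights of all words add up to `∑_{|α| = n} 1/α! = (km)ⁿ/n!`. Since
`(m choose n)/mⁿ → 1/n!` and there are `kⁿ` words, every normalised weight is squeezed to `1/n!`.
-/

open Filter Finset Topology
open scoped Nat

theorem tendsto_of_le_of_tendsto_sum {β ι : Type*} [Fintype ι] {l : Filter β} {c : β → ι → ℝ}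
    {L : β → ℝ} {a : ℝ} (hL : Tendsto L l (𝓝 a)) (hle : ∀ᶠ x in l, ∀ i, L x ≤ c x i)
    (hsum : Tendsto (fun x => ∑ i, c x i) l (𝓝 (Fintype.card ι * a))) (i : ι) :
    Tendsto (fun x => c x i) l (𝓝 a) := by
  classical
  have hcard : (Fintype.card ι : ℝ) = #(univ.erase i) + 1 := by
    rw [card_erase_of_mem (mem_univ i), card_univ,
      Nat.cast_sub (Fintype.card_pos_iff.2 ⟨i⟩), Nat.cast_one, sub_add_cancel]
  have hupper : Tendsto (fun x => ∑ j, c x j - #(univ.erase i) * L x) l (𝓝 a) := by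
    simpa [hcard, add_mul] using hsum.sub (hL.const_mul (#(univ.erase i) : ℝ))
  refine tendsto_of_tendsto_of_tendsto_of_le_of_le' hL hupper ?_ ?_ <;>
    filter_upwards [hle] with x hx
  · exact hx i
  · rw [← add_sum_erase _ _ (mem_univ i), ← nsmul_eq_mul, ← sum_const]
    linarith [sum_le_sum fun j (_ : j ∈ univ.erase i) => hx j]

theorem sum_pow_eq_sum_prod_ofFn {ι R : Type*} [Fintype ι] [Semiring R] (f : ι → R) :
    ∀ n : ℕ, (∑ i, f i) ^ n = ∑ p : Fin n → ι, (List.ofFn fun j => f (p j)).prod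
  | 0 => by simp
  | n + 1 => by
    rw [pow_succ', sum_pow_eq_sum_prod_ofFn f n, sum_mul_sum,
      ← (Fin.consEquiv fun _ => ι).sum_comp, Fintype.sum_prod_type]
    simp [List.ofFn_succ]

theorem sum_antidiagonalTuple_inv_prod_factorial (N n : ℕ) :
    ∑ α ∈ Nat.antidiagonalTuple N n, (∏ i, ((α i)! : ℝ))⁻¹ = N ^ n / n ! := by
  have hpow := sum_pow_eq_sum_piAntidiag (univ : Finset (Fin N)) (fun _ => (1 : ℝ)) n
  simp only [sum_const, card_univ, Fintype.card_fin, nsmul_eq_mul, mul_one, one_pow,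
    prod_const_one, piAntidiag_univ_fin_eq_antidiagonalTuple] at hpow
  rw [hpow, sum_div]
  refine sum_congr rfl fun α hα => ?_
  have hspec := Nat.multinomial_spec univ α
  rw [Nat.mem_antidiagonalTuple.1 hα] at hspec
  rw [eq_div_iff (by positivity), ← hspec]
  push_cast
  field_simp

theorem tendsto_choose_div_pow (n : ℕ) :
    Tendsto (fun m : ℕ => (m.choose n : ℝ) / m ^ n) atTop (𝓝 (n ! : ℝ)⁻¹) := by
  have h := (isEquivalent_choose n).div (.refl (u := fun m : ℕ => (m : ℝ) ^ n))
  refine h.symm.tendsto_nhds (tendsto_const_nhds.congr' ?_)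
  filter_upwards [eventually_ne_atTop 0] with m hm
  simp only [Pi.div_apply]
  field_simp

theorem choose_le_card_strictMono (m n : ℕ) :
    m.choose n ≤ #{q : Fin n → Fin m | StrictMono q} := by
  have hchoose := card_powersetCard n (univ : Finset (Fin m))
  rw [card_univ, Fintype.card_fin] at hchoose
  rw [← hchoose]
  refine card_le_card_of_surjOn (fun q => univ.image q) fun s hs => ?_
  have hcard := mem_powersetCard_univ.1 hs
  exact ⟨s.orderEmbOfFin hcard, by simp [(s.orderEmbOfFin hcard).strictMono], by simp⟩

section Word

variable {σ : Type*} {N : ℕ}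

def word (c : Fin N → σ) (α : Fin N → ℕ) : List σ :=
  (List.ofFn fun i => List.replicate (α i) (c i)).flatten

theorem length_word (c : Fin N → σ) (α : Fin N → ℕ) : (word c α).length = ∑ i, α i := by
  simp [word, List.sum_ofFn]

theorem prod_map_word {M : Type*} [Monoid M] (c : Fin N → σ) (α : Fin N → ℕ) (f : σ → M) :
    ((word c α).map f).prod = (List.ofFn fun i => f (c i) ^ α i).prod := by
  simp [word, List.map_flatten, List.prod_flatten, Function.comp_def]

theorem word_eq_map_word_id (c : Fin N → σ) (α : Fin N → ℕ) :
    word c α = (word id α).map c := by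
  simp [word, List.map_flatten, Function.comp_def]

theorem sortedLT_word_id {α : Fin N → ℕ} (hα : ∀ i, α i ≤ 1) : (word id α).SortedLT := by
  rw [List.sortedLT_iff_pairwise, word, List.pairwise_flatten]
  simp only [List.mem_ofFn, List.pairwise_ofFn, List.mem_replicate]
  refine ⟨?_, fun i j hij x hx y hy => hx.2 ▸ hy.2 ▸ hij⟩
  rintro _ ⟨i, rfl⟩
  exact List.pairwise_replicate.2 (.inl (hα i))

theorem word_indicator_range {n : ℕ} (c : Fin N → σ) {w : Fin n → Fin N} (hw : StrictMono w) :
    word c ((Set.range w).indicator 1) = List.ofFn fun j => c (w j) := by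
  have hid : word id ((Set.range w).indicator 1) = List.ofFn w := by
    refine (sortedLT_word_id fun i => ?_).eq_of_mem_iff (List.sortedLT_ofFn_iff.2 hw)
      fun i => by simp [word]
    unfold Set.indicator
    split <;> simp
  rw [word_eq_map_word_id, hid, List.map_ofFn]
  rfl

theorem sum_indicator_range_one {n : ℕ} {w : Fin n → Fin N} (hw : Function.Injective w) :
    ∑ i, (Set.range w).indicator 1 i = n := by
  classical
  simp [Set.indicator_apply, sum_boole, card_image_of_injective _ hw]

variable [DecidableEq σ]

theorem sum_smul_word_eq [Fintype σ] {S M : Type*} [Semiring S] [AddCommMonoid M] [Module S M]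
    (c : Fin N → σ) (n : ℕ) (a : (Fin N → ℕ) → S) (F : List σ → M) :
    ∑ α ∈ Nat.antidiagonalTuple N n, a α • F (word c α) =
      ∑ p : Fin n → σ,
        (∑ α ∈ Nat.antidiagonalTuple N n with word c α = List.ofFn p, a α) • F (List.ofFn p) := by
  have hmaps : ∀ α ∈ Nat.antidiagonalTuple N n,
      word c α ∈ (univ : Finset (Fin n → σ)).map ⟨List.ofFn, List.ofFn_injective⟩ := by
    intro α hα
    have hlen : (word c α).length = n := by
      rw [length_word, Nat.mem_antidiagonalTuple.1 hα]
    exact mem_map.2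
      ⟨fun j => (word c α)[j], mem_univ _, List.ext_getElem (by simp [hlen]) (by simp)⟩
  rw [← sum_fiberwise_of_maps_to hmaps, sum_map]
  refine sum_congr rfl fun p _ => ?_
  rw [sum_smul]
  exact sum_congr rfl fun α hα => by rw [(mem_filter.1 hα).2]

noncomputable def wordWeight (c : Fin N → σ) {n : ℕ} (p : Fin n → σ) : ℝ :=
  ∑ α ∈ Nat.antidiagonalTuple N n with word c α = List.ofFn p, (∏ i, ((α i)! : ℝ))⁻¹

theorem sum_wordWeight [Fintype σ] (c : Fin N → σ) (n : ℕ) :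
    ∑ p : Fin n → σ, wordWeight c p = N ^ n / n ! := by
  rw [← sum_antidiagonalTuple_inv_prod_factorial]
  simpa [wordWeight] using
    (sum_smul_word_eq c n (fun α => (∏ i, ((α i)! : ℝ))⁻¹) fun _ => (1 : ℝ)).symm

end Word

section Interleave

variable {k m n : ℕ}

/-- The `j`-th letter goes into block `q j` (of length `k`), at the position of colour `p j`. -/
def interleave (p : Fin n → Fin k) (q : Fin n → Fin m) : Fin n → Fin (k * m) :=
  fun j => ⟨k * q j + p j, by have := (q j).2; have := (p j).2; nlinarith⟩

theorem interleave_strictMono (p : Fin n → Fin k) {q : Fin n → Fin m} (hq : StrictMono q) :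
    StrictMono (interleave p q) := by
  intro j j' hjj'
  have hlt : (q j : ℕ) + 1 ≤ q j' := hq hjj'
  have := Nat.mul_le_mul_left k hlt
  have := (p j).2
  show k * q j + p j < k * q j' + p j'
  nlinarith

theorem interleave_div (p : Fin n → Fin k) (q : Fin n → Fin m) (j : Fin n) :
    (interleave p q j : ℕ) / k = q j := by
  rw [interleave, Nat.mul_add_div (by have := (p j).2; omega), Nat.div_eq_of_lt (p j).2,
    add_zero]

variable [NeZero k]

theorem ofNat_interleave (p : Fin n → Fin k) (q : Fin n → Fin m) (j : Fin n) :
    Fin.ofNat k (interleave p q j) = p j := by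
  ext
  simp [interleave, Nat.mod_eq_of_lt (p j).2]

theorem choose_le_wordWeight (p : Fin n → Fin k) (m : ℕ) :
    (m.choose n : ℝ) ≤ wordWeight (fun i : Fin (k * m) => Fin.ofNat k i) p := by
  set S : Finset (Fin n → Fin m) := {q | StrictMono q}
  set ind : (Fin n → Fin m) → Fin (k * m) → ℕ := fun q => (Set.range (interleave p q)).indicator 1
  have hinj : Set.InjOn ind S := by
    intro q₁ hq₁ q₂ hq₂ h
    have hrange := ((interleave_strictMono p (mem_filter.1 hq₁).2).range_inj
      (interleave_strictMono p (mem_filter.1 hq₂).2)).1 (Set.indicator_one_inj ℕ h)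
    funext j
    exact Fin.ext (by rw [← interleave_div p q₁ j, ← interleave_div p q₂ j, hrange])
  have hfibre : ∀ q ∈ S, ind q ∈ {α ∈ Nat.antidiagonalTuple (k * m) n |
      word (fun i : Fin (k * m) => Fin.ofNat k i) α = List.ofFn p} := by
    intro q hq
    have hmono := interleave_strictMono p (mem_filter.1 hq).2
    refine mem_filter.2
      ⟨Nat.mem_antidiagonalTuple.2 (sum_indicator_range_one hmono.injective), ?_⟩
    simp only [ind, word_indicator_range _ hmono, ofNat_interleave]
  have hone : ∀ q, (∏ i, ((ind q i)! : ℝ))⁻¹ = 1 := fun q => by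
    simp [ind, Set.indicator_apply, apply_ite]
  calc (m.choose n : ℝ) ≤ #S := by exact_mod_cast choose_le_card_strictMono m n
    _ = ∑ β ∈ S.image ind, (∏ i, ((β i)! : ℝ))⁻¹ := by simp [sum_image hinj, hone]
    _ ≤ _ := sum_le_sum_of_subset_of_nonneg (image_subset_iff.2 hfibre) fun _ _ _ => by positivity

theorem tendsto_wordWeight_div_pow (p : Fin n → Fin k) :
    Tendsto (fun m : ℕ => wordWeight (fun i : Fin (k * m) => Fin.ofNat k i) p / m ^ n) atTop
      (𝓝 (n ! : ℝ)⁻¹) := by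
  refine tendsto_of_le_of_tendsto_sum (tendsto_choose_div_pow n) (.of_forall fun m p =>
    div_le_div_of_nonneg_right (choose_le_wordWeight p m) (by positivity))
    (tendsto_const_nhds.congr' ?_) p
  filter_upwards [eventually_ne_atTop 0] with m hm
  rw [← sum_div, sum_wordWeight, Fintype.card_fun, Fintype.card_fin, Fintype.card_fin]
  push_cast
  field_simp
  ring

theorem tendsto_sum_smul_prod_periodic {R : Type*} [Semiring R] [TopologicalSpace R]
    [ContinuousAdd R] [Module ℝ R] [ContinuousSMul ℝ R] (X : Fin k → R) (n : ℕ) :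
    Tendsto (fun m : ℕ =>
        ∑ α ∈ Nat.antidiagonalTuple (k * m) n, (((m : ℝ) ^ n * ∏ i, ((α i)! : ℝ))⁻¹) •
          (List.ofFn fun i : Fin (k * m) => X (Fin.ofNat k i) ^ α i).prod)
      atTop (𝓝 ((n ! : ℝ)⁻¹ • (∑ j, X j) ^ n)) := by
  have hregroup : ∀ m : ℕ,
      ∑ α ∈ Nat.antidiagonalTuple (k * m) n, (((m : ℝ) ^ n * ∏ i, ((α i)! : ℝ))⁻¹) •
          (List.ofFn fun i : Fin (k * m) => X (Fin.ofNat k i) ^ α i).prod =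
        ∑ p : Fin n → Fin k, (wordWeight (fun i : Fin (k * m) => Fin.ofNat k i) p / m ^ n) •
          (List.ofFn fun j => X (p j)).prod := by
    intro m
    simp_rw [← prod_map_word]
    rw [sum_smul_word_eq _ n _ fun w => (w.map X).prod]
    refine sum_congr rfl fun p _ => ?_
    rw [List.map_ofFn, wordWeight, sum_div]
    congr 1
    exact sum_congr rfl fun α _ => by rw [mul_inv, div_eq_mul_inv, mul_comm]
  simp_rw [hregroup, sum_pow_eq_sum_prod_ofFn, smul_sum]
  exact tendsto_finsetSum _ fun p _ => (tendsto_wordWeight_div_pow p).smul_const _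

end Interleave

theorem stmt17 {H : Type*} [NormedAddCommGroup H] [NormedSpace ℂ H]
    (A B : H →L[ℂ] H) (n : ℕ) :
    Tendsto (fun m : ℕ =>
        ∑ α ∈ Finset.Nat.antidiagonalTuple (2*m) n,
          (((m : ℝ)^n * ∏ i, (Nat.factorial (α i) : ℝ))⁻¹) •
            (List.ofFn (fun i : Fin (2*m) =>
              (if (i : ℕ) % 2 = 0 then A else B) ^ (2 * α i))).prod)
      atTop (nhds ((Nat.factorial n : ℝ)⁻¹ • (A^2 + B^2)^n)) := by
  have h := tendsto_sum_smul_prod_periodic (fun j : Fin 2 => (if (j : ℕ) = 0 then A else B) ^ 2) n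
  simpa [Fin.val_ofNat, ← pow_mul] using h
end
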